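/- arXiv:2310.05342 — 2 statements merged into one kernel-verified Lean document; each statement's English description precedes it below -/
import Mathlib

section
/- Under the hypotheses of the preceding energy estimate, if additionally 2κ > 0 is the smallest eigenvalue of A_0 and Λ its largest eigenvalue, then ||U(·,t)||_{L^2} ≤ sqrt(Λ/(2κ)) ||U(·,0)||_{L^2} for all t ≥ 0, with constant independent of ε. -/
open Matrix RealInnerProductSpace

lemma myDotSymm {n : ℕ} (M : Matrix (Fin n) (Fin n) ℝ) (hM : M.IsSymm)
    (u v : Fin n → ℝ) : u ⬝ᵥ M.mulVec v = v ⬝ᵥ M.mulVec u := by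
  rw [Matrix.dotProduct_mulVec, ← Matrix.mulVec_transpose, hM, dotProduct_comm]

lemma myMulVecDot {n : ℕ} (M : Matrix (Fin n) (Fin n) ℝ) (u v : Fin n → ℝ) :
    (M.mulVec u) ⬝ᵥ v = u ⬝ᵥ (Mᵀ.mulVec v) := by
  rw [dotProduct_comm, Matrix.dotProduct_mulVec, ← Matrix.mulVec_transpose,
    dotProduct_comm]

lemma myHasDerivAtQuad {n : ℕ} (M : Matrix (Fin n) (Fin n) ℝ) {f : ℝ → Fin n → ℝ}
    {f' : Fin n → ℝ} {x : ℝ} (hf : HasDerivAt f f' x) :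
    HasDerivAt (fun y => f y ⬝ᵥ M.mulVec (f y))
      (f' ⬝ᵥ M.mulVec (f x) + f x ⬝ᵥ M.mulVec f') x := by
  have h1 : ∀ i, HasDerivAt (fun y => f y i) (f' i) x := hasDerivAt_pi.mp hf
  have h2 : ∀ i, HasDerivAt (fun y => M.mulVec (f y) i) (M.mulVec f' i) x := by
    intro i
    simp only [Matrix.mulVec, dotProduct]
    exact HasDerivAt.fun_sum fun j _ => (h1 j).const_mul (M i j)
  have := HasDerivAt.fun_sum (fun i (_ : i ∈ Finset.univ) => (h1 i).fun_mul (h2 i))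
  exact this.congr_deriv (by simp [dotProduct, Finset.sum_add_distrib])

lemma myContDot {n : ℕ} {α : Type*} [TopologicalSpace α] (M : Matrix (Fin n) (Fin n) ℝ)
    {a b : α → Fin n → ℝ} (ha : Continuous a) (hb : Continuous b) :
    Continuous fun p => a p ⬝ᵥ M.mulVec (b p) := by
  simp only [dotProduct, Matrix.mulVec]
  exact continuous_finset_sum _ fun i _ => ((continuous_apply i).comp ha).mul
    (continuous_finset_sum _ fun j _ => continuous_const.mul ((continuous_apply j).comp hb))

lemma myQuadBounds {n : ℕ} (M : Matrix (Fin n) (Fin n) ℝ) (hM : M.IsHermitian)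
    {c C : ℝ} (h1 : ∀ i, c ≤ hM.eigenvalues i) (h2 : ∀ i, hM.eigenvalues i ≤ C)
    (u : Fin n → ℝ) :
    c * (∑ i, u i ^ 2) ≤ u ⬝ᵥ M.mulVec u ∧ u ⬝ᵥ M.mulVec u ≤ C * ∑ i, u i ^ 2 := by
  classical
  set b := hM.eigenvectorBasis with hb
  set v : EuclideanSpace ℝ (Fin n) := WithLp.toLp 2 u with hv
  set w : EuclideanSpace ℝ (Fin n) := WithLp.toLp 2 (M.mulVec u) with hw
  have hMsymm : M.IsSymm := by
    simpa [Matrix.IsSymm, ← Matrix.conjTranspose_eq_transpose_of_trivial] using hM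
  have hbi : ∀ i, ⟪b i, w⟫ = hM.eigenvalues i * ⟪b i, v⟫ := by
    intro i
    have h3 : (b i : Fin n → ℝ) ⬝ᵥ M.mulVec u = (M.mulVec (b i)) ⬝ᵥ u := by
      rw [Matrix.dotProduct_mulVec, ← Matrix.mulVec_transpose, hMsymm]
    have h4 : M.mulVec (b i) = hM.eigenvalues i • (b i : Fin n → ℝ) :=
      hM.mulVec_eigenvectorBasis i
    simp only [PiLp.inner_apply, RCLike.inner_apply, conj_trivial, mul_comm (w.ofLp _), mul_comm (v.ofLp _)]
    calc ∑ j, (b i : Fin n → ℝ) j * w j = (b i : Fin n → ℝ) ⬝ᵥ M.mulVec u := rfl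
      _ = (M.mulVec (b i)) ⬝ᵥ u := h3
      _ = hM.eigenvalues i * ((b i : Fin n → ℝ) ⬝ᵥ u) := by rw [h4, smul_dotProduct]; rfl
      _ = hM.eigenvalues i * ∑ j, (b i : Fin n → ℝ) j * v j := rfl
  have key : u ⬝ᵥ M.mulVec u = ∑ i, hM.eigenvalues i * ⟪b i, v⟫ ^ 2 := by
    have hs := b.sum_inner_mul_inner v w
    have hl : ⟪v, w⟫ = u ⬝ᵥ M.mulVec u := by
      simp only [PiLp.inner_apply, RCLike.inner_apply, conj_trivial, mul_comm (w.ofLp _)]; rfl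
    rw [← hs] at hl
    rw [← hl]
    refine Finset.sum_congr rfl fun i _ => ?_
    rw [hbi i, real_inner_comm v (b i)]
    ring
  have norm_eq : ∑ i, u i ^ 2 = ∑ i, ⟪b i, v⟫ ^ 2 := by
    have hs := b.sum_inner_mul_inner v v
    have hl : ⟪v, v⟫ = ∑ i, u i ^ 2 := by
      simp only [PiLp.inner_apply, RCLike.inner_apply, conj_trivial]
      exact Finset.sum_congr rfl fun i _ => (sq (u i)).symm
    rw [← hs] at hl
    rw [← hl]
    refine Finset.sum_congr rfl fun i _ => ?_
    rw [real_inner_comm v (b i)]; ring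
  constructor
  · rw [key, norm_eq, Finset.mul_sum]
    exact Finset.sum_le_sum fun i _ => mul_le_mul_of_nonneg_right (h1 i) (sq_nonneg _)
  · rw [key, norm_eq, Finset.mul_sum]
    exact Finset.sum_le_sum fun i _ => mul_le_mul_of_nonneg_right (h2 i) (sq_nonneg _)

open Matrix

theorem uniform_L2_stability_relaxation (n : ℕ) (A₀ A Q : Matrix (Fin n) (Fin n) ℝ)
    (hA₀ : A₀.PosDef) (hA₀A : (A₀ * A).IsSymm)
    (hdiss : ∀ u : Fin n → ℝ, u ⬝ᵥ (A₀ * Q + Qᵀ * A₀).mulVec u ≤ 0)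
    (κ Λ : ℝ) (hκ : 0 < κ)
    (hmin : ∀ i, 2 * κ ≤ hA₀.1.eigenvalues i)
    (hmax : ∀ i, hA₀.1.eigenvalues i ≤ Λ)
    (ε : ℝ) (hε : 0 < ε)
    (U : ℝ → ℝ → (Fin n → ℝ))
    (hU : ContDiff ℝ (⊤ : ℕ∞) (fun p : ℝ × ℝ => U p.1 p.2))
    (hper : ∀ x t : ℝ, U (x + 2 * Real.pi) t = U x t)
    (hpde : ∀ x t : ℝ,
      deriv (fun s => U x s) t + A.mulVec (deriv (fun y => U y t) x)
        = (1/ε) • Q.mulVec (U x t)) :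
    ∀ t : ℝ, 0 ≤ t →
      Real.sqrt (∫ x in (0:ℝ)..(2 * Real.pi), ∑ i, (U x t i)^2)
        ≤ Real.sqrt (Λ / (2 * κ)) *
          Real.sqrt (∫ x in (0:ℝ)..(2 * Real.pi), ∑ i, (U x 0 i)^2) := by
  intro t ht
  rcases Nat.eq_zero_or_pos n with hn | hn
  · subst hn
    simp only [Finset.univ_eq_empty, Finset.sum_empty, intervalIntegral.integral_zero,
      Real.sqrt_zero]
    positivity
  have hΛpos : 0 < Λ := lt_of_lt_of_le (by linarith) ((hmin ⟨0, hn⟩).trans (hmax ⟨0, hn⟩))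
  have hπ : (0:ℝ) ≤ 2 * Real.pi := by positivity
  have hUcont : Continuous fun p : ℝ × ℝ => U p.1 p.2 := hU.continuous
  have hA₀s : A₀.IsSymm := by
    simpa [Matrix.IsSymm, ← Matrix.conjTranspose_eq_transpose_of_trivial] using hA₀.1
  have hA₀As : (A₀ * A).IsSymm := hA₀A
  set F : ℝ × ℝ → Fin n → ℝ := fun p => U p.1 p.2 with hFdef
  have hdiffF : Differentiable ℝ F := hU.differentiable (by simp)
  set Ut : ℝ → ℝ → Fin n → ℝ := fun x s => fderiv ℝ F (x, s) (0, 1) with hUtdef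
  set Ux : ℝ → ℝ → Fin n → ℝ := fun x s => fderiv ℝ F (x, s) (1, 0) with hUxdef
  have hUt : ∀ x s, HasDerivAt (fun r => U x r) (Ut x s) s := by
    intro x s
    have h2 : HasDerivAt (fun r : ℝ => ((x, r) : ℝ × ℝ)) ((0 : ℝ), (1 : ℝ)) s :=
      (hasDerivAt_const s x).prodMk (hasDerivAt_id s)
    exact (hdiffF (x, s)).hasFDerivAt.comp_hasDerivAt s h2
  have hUx : ∀ x s, HasDerivAt (fun y => U y s) (Ux x s) x := by
    intro x s
    have h2 : HasDerivAt (fun y : ℝ => ((y, s) : ℝ × ℝ)) ((1 : ℝ), (0 : ℝ)) x :=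
      (hasDerivAt_id x).prodMk (hasDerivAt_const x s)
    exact (hdiffF (x, s)).hasFDerivAt.comp_hasDerivAt x h2
  have hUtc : Continuous fun p : ℝ × ℝ => Ut p.1 p.2 := by
    have h1 : Continuous (fderiv ℝ F) := hU.continuous_fderiv (by simp)
    exact h1.clm_apply continuous_const
  have hUxc : Continuous fun p : ℝ × ℝ => Ux p.1 p.2 := by
    have h1 : Continuous (fderiv ℝ F) := hU.continuous_fderiv (by simp)
    exact h1.clm_apply continuous_const
  have hpde' : ∀ x s, Ut x s = (1/ε) • Q.mulVec (U x s) - A.mulVec (Ux x s) := by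
    intro x s
    have h := hpde x s
    rw [(hUt x s).deriv, (hUx x s).deriv] at h
    exact eq_sub_of_add_eq h
  -- the t-derivative of the energy density
  set g : ℝ → ℝ → ℝ :=
    fun s x => Ut x s ⬝ᵥ A₀.mulVec (U x s) + U x s ⬝ᵥ A₀.mulVec (Ut x s) with hgdef
  have hgd : ∀ x s, HasDerivAt (fun r => U x r ⬝ᵥ A₀.mulVec (U x r)) (g s x) s :=
    fun x s => myHasDerivAtQuad A₀ (hUt x s)
  have hgc : Continuous fun p : ℝ × ℝ => g p.2 p.1 :=
    (myContDot A₀ hUtc hUcont).add (myContDot A₀ hUcont hUtc)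
  -- energy
  set E : ℝ → ℝ := fun s => ∫ x in (0:ℝ)..(2*Real.pi), U x s ⬝ᵥ A₀.mulVec (U x s) with hEdef
  have hEderiv : ∀ t₀ : ℝ, HasDerivAt E (∫ x in (0:ℝ)..(2*Real.pi), g t₀ x) t₀ := by
    intro t₀
    obtain ⟨C, hC⟩ : ∃ C, ∀ p ∈ (Set.uIcc (0:ℝ) (2*Real.pi)) ×ˢ Metric.closedBall t₀ 1,
        ‖g p.2 p.1‖ ≤ C :=
      (isCompact_uIcc.prod (isCompact_closedBall _ _)).exists_bound_of_continuousOn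
        hgc.continuousOn
    have key := intervalIntegral.hasDerivAt_integral_of_dominated_loc_of_deriv_le
      (F := fun s x => U x s ⬝ᵥ A₀.mulVec (U x s)) (F' := fun s x => g s x)
      (a := 0) (b := 2*Real.pi) (x₀ := t₀) (bound := fun _ => C)
      (μ := MeasureTheory.volume) (Metric.ball_mem_nhds t₀ one_pos)
      (Filter.Eventually.of_forall fun s =>
        ((myContDot A₀ (hUcont.comp (continuous_id.prodMk continuous_const))
          (hUcont.comp (continuous_id.prodMk continuous_const))).aestronglyMeasurable))
      ((myContDot A₀ (hUcont.comp (continuous_id.prodMk continuous_const))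
        (hUcont.comp (continuous_id.prodMk continuous_const))).intervalIntegrable _ _)
      ((hgc.comp (continuous_id.prodMk continuous_const)).aestronglyMeasurable)
      (Filter.Eventually.of_forall fun x hx s hs =>
        hC (x, s) ⟨Set.uIoc_subset_uIcc hx, Metric.ball_subset_closedBall hs⟩)
      (intervalIntegrable_const)
      (Filter.Eventually.of_forall fun x hx s hs => hgd x s)
    exact key.2
  -- E' is nonpositive
  have hgle : ∀ t₀ : ℝ, (∫ x in (0:ℝ)..(2*Real.pi), g t₀ x) ≤ 0 := by
    intro t₀
    set h' : ℝ → ℝ := fun x =>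
      Ux x t₀ ⬝ᵥ (A₀*A).mulVec (U x t₀) + U x t₀ ⬝ᵥ (A₀*A).mulVec (Ux x t₀) with hh'
    set D : ℝ → ℝ := fun x => (1/ε) * (U x t₀ ⬝ᵥ (A₀*Q + Qᵀ*A₀).mulVec (U x t₀)) with hDdef
    have hAt : Aᵀ * A₀ = A₀ * A := by
      have h1 := hA₀A
      rw [Matrix.IsSymm, Matrix.transpose_mul, hA₀s.eq] at h1
      exact h1
    have hQt : Qᵀ * A₀ = (A₀ * Q)ᵀ := by rw [Matrix.transpose_mul, hA₀s.eq]
    have hgsplit : ∀ x, g t₀ x = D x - h' x := by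
      intro x
      have e1 : U x t₀ ⬝ᵥ A₀.mulVec (Ut x t₀) = Ut x t₀ ⬝ᵥ A₀.mulVec (U x t₀) :=
        myDotSymm A₀ hA₀s _ _
      have e2 : U x t₀ ⬝ᵥ (A₀*A).mulVec (Ux x t₀) = Ux x t₀ ⬝ᵥ (A₀*A).mulVec (U x t₀) :=
        myDotSymm (A₀*A) hA₀As _ _
      have e3 : (A.mulVec (Ux x t₀)) ⬝ᵥ A₀.mulVec (U x t₀)
          = Ux x t₀ ⬝ᵥ (A₀*A).mulVec (U x t₀) := by
        rw [myMulVecDot, Matrix.mulVec_mulVec, hAt]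
      have e4 : (Q.mulVec (U x t₀)) ⬝ᵥ A₀.mulVec (U x t₀)
          = U x t₀ ⬝ᵥ (Qᵀ*A₀).mulVec (U x t₀) := by
        rw [myMulVecDot, Matrix.mulVec_mulVec]
      have e5 : U x t₀ ⬝ᵥ (A₀*Q).mulVec (U x t₀) = U x t₀ ⬝ᵥ (Qᵀ*A₀).mulVec (U x t₀) := by
        rw [hQt]
        rw [Matrix.dotProduct_mulVec, ← Matrix.mulVec_transpose, dotProduct_comm]
      have e6 : Ut x t₀ ⬝ᵥ A₀.mulVec (U x t₀)
          = (1/ε) * (U x t₀ ⬝ᵥ (Qᵀ*A₀).mulVec (U x t₀))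
            - Ux x t₀ ⬝ᵥ (A₀*A).mulVec (U x t₀) := by
        rw [hpde' x t₀, sub_dotProduct, smul_dotProduct, e3, e4, smul_eq_mul]
      show Ut x t₀ ⬝ᵥ A₀.mulVec (U x t₀) + U x t₀ ⬝ᵥ A₀.mulVec (Ut x t₀)
          = 1/ε * (U x t₀ ⬝ᵥ (A₀*Q + Qᵀ*A₀).mulVec (U x t₀))
            - (Ux x t₀ ⬝ᵥ (A₀*A).mulVec (U x t₀) + U x t₀ ⬝ᵥ (A₀*A).mulVec (Ux x t₀))
      rw [e1, e2, e6, Matrix.add_mulVec, dotProduct_add, e5]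
      ring
    have hflux : (∫ x in (0:ℝ)..(2*Real.pi), h' x) = 0 := by
      have hder : ∀ x ∈ Set.uIcc (0:ℝ) (2*Real.pi),
          HasDerivAt (fun y => U y t₀ ⬝ᵥ (A₀*A).mulVec (U y t₀)) (h' x) x :=
        fun x _ => myHasDerivAtQuad (A₀*A) (hUx x t₀)
      have hint : IntervalIntegrable h' MeasureTheory.volume 0 (2*Real.pi) :=
        ((myContDot (A₀*A) (hUxc.comp (continuous_id.prodMk continuous_const))
            (hUcont.comp (continuous_id.prodMk continuous_const))).add
          (myContDot (A₀*A) (hUcont.comp (continuous_id.prodMk continuous_const))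
            (hUxc.comp (continuous_id.prodMk continuous_const)))).intervalIntegrable _ _
      rw [intervalIntegral.integral_eq_sub_of_hasDerivAt hder hint]
      have hper' : U (2*Real.pi) t₀ = U 0 t₀ := by simpa using hper 0 t₀
      rw [hper', sub_self]
    have hgDh : ∀ x, g t₀ x = D x - h' x := hgsplit
    have hDcont : Continuous D :=
      continuous_const.mul (myContDot _ (hUcont.comp (continuous_id.prodMk continuous_const))
        (hUcont.comp (continuous_id.prodMk continuous_const)))
    have hh'int : IntervalIntegrable h' MeasureTheory.volume 0 (2*Real.pi) :=
      ((myContDot (A₀*A) (hUxc.comp (continuous_id.prodMk continuous_const))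
          (hUcont.comp (continuous_id.prodMk continuous_const))).add
        (myContDot (A₀*A) (hUcont.comp (continuous_id.prodMk continuous_const))
          (hUxc.comp (continuous_id.prodMk continuous_const)))).intervalIntegrable _ _
    have hDint : IntervalIntegrable D MeasureTheory.volume 0 (2*Real.pi) :=
      hDcont.intervalIntegrable _ _
    calc (∫ x in (0:ℝ)..(2*Real.pi), g t₀ x)
        = ∫ x in (0:ℝ)..(2*Real.pi), (D x - h' x) := by
          refine intervalIntegral.integral_congr fun x _ => hgDh x
      _ = (∫ x in (0:ℝ)..(2*Real.pi), D x) - ∫ x in (0:ℝ)..(2*Real.pi), h' x :=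
          intervalIntegral.integral_sub hDint hh'int
      _ = ∫ x in (0:ℝ)..(2*Real.pi), D x := by rw [hflux, sub_zero]
      _ ≤ ∫ x in (0:ℝ)..(2*Real.pi), (0:ℝ) := by
          apply intervalIntegral.integral_mono_on hπ hDint intervalIntegrable_const
          intro x _
          have := hdiss (U x t₀)
          have h1ε : 0 ≤ 1/ε := by positivity
          simpa [hDdef] using mul_nonpos_of_nonneg_of_nonpos h1ε this
      _ = 0 := by simp
  -- E is antitone
  have hEmono : E t ≤ E 0 := by
    have hdiffE : Differentiable ℝ E := fun t₀ => (hEderiv t₀).differentiableAt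
    have hd : ∀ t₀, deriv E t₀ ≤ 0 := fun t₀ => (hEderiv t₀).deriv ▸ hgle t₀
    exact antitone_of_deriv_nonpos hdiffE hd ht
  -- eigenvalue bounds
  have hquad := fun u => myQuadBounds A₀ hA₀.1 hmin hmax u
  have hsqint : ∀ s : ℝ, IntervalIntegrable (fun x => ∑ i, (U x s i)^2)
      MeasureTheory.volume 0 (2*Real.pi) := by
    intro s
    apply Continuous.intervalIntegrable
    exact continuous_finset_sum _ fun i _ =>
      (((continuous_apply i).comp (hUcont.comp (continuous_id.prodMk continuous_const)))).pow 2
  have hEint : ∀ s : ℝ, IntervalIntegrable (fun x => U x s ⬝ᵥ A₀.mulVec (U x s))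
      MeasureTheory.volume 0 (2*Real.pi) := fun s =>
    (myContDot A₀ (hUcont.comp (continuous_id.prodMk continuous_const))
      (hUcont.comp (continuous_id.prodMk continuous_const))).intervalIntegrable _ _
  set a := ∫ x in (0:ℝ)..(2*Real.pi), ∑ i, (U x t i)^2 with hadef
  set b := ∫ x in (0:ℝ)..(2*Real.pi), ∑ i, (U x 0 i)^2 with hbdef
  have hlow : 2*κ * a ≤ E t := by
    rw [hadef, ← intervalIntegral.integral_const_mul]
    exact intervalIntegral.integral_mono_on hπ ((hsqint t).const_mul _) (hEint t)
      (fun x _ => (hquad (U x t)).1)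
  have hup : E 0 ≤ Λ * b := by
    rw [hbdef, ← intervalIntegral.integral_const_mul]
    exact intervalIntegral.integral_mono_on hπ (hEint 0) ((hsqint 0).const_mul _)
      (fun x _ => (hquad (U x 0)).2)
  have hbnn : 0 ≤ b := by
    rw [hbdef]
    apply intervalIntegral.integral_nonneg hπ
    intro x _
    positivity
  have h2κ : (0:ℝ) < 2*κ := by linarith
  have hab : a ≤ (Λ/(2*κ)) * b := by
    rw [div_mul_eq_mul_div, le_div_iff₀ h2κ]
    nlinarith [hlow, hup, hEmono]
  calc Real.sqrt a ≤ Real.sqrt ((Λ/(2*κ)) * b) := Real.sqrt_le_sqrt hab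
    _ = Real.sqrt (Λ/(2*κ)) * Real.sqrt b := Real.sqrt_mul (by positivity) b
end

section
/- Let A be the 3×3 matrix with rows (0,1,0), (0,0,1), (0,1,0) and Q the 3×3 matrix with rows (0,0,0), (0,0,0), (1,0,-2). Then there exists a symmetric positive definite 3×3 matrix A_0 such that A_0 A is symmetric and A_0 Q + Q^T A_0 is negative semidefinite. -/
open Matrix

theorem broadwell_structural_stability :
    let A : Matrix (Fin 3) (Fin 3) ℝ := !![0, 1, 0; 0, 0, 1; 0, 1, 0]
    let Q : Matrix (Fin 3) (Fin 3) ℝ := !![0, 0, 0; 0, 0, 0; 1, 0, -2]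
    ∃ A₀ : Matrix (Fin 3) (Fin 3) ℝ, A₀.PosDef ∧ (A₀ * A).IsSymm ∧
      ∀ u : Fin 3 → ℝ, u ⬝ᵥ (A₀ * Q + Qᵀ * A₀).mulVec u ≤ 0 := by
  intro A Q
  refine ⟨!![1, 0, -1; 0, 1, 0; -1, 0, 2], ⟨?_, ?_⟩, ?_, ?_⟩
  · ext i j; fin_cases i <;> fin_cases j <;>
      norm_num [Matrix.conjTranspose, Matrix.IsHermitian, Matrix.transpose_apply,
        Matrix.vecHead, Matrix.vecTail]
  · refine (posDef_iff_dotProduct_mulVec.mpr ⟨?_, fun x hx => ?_⟩).2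
    · ext i j; fin_cases i <;> fin_cases j <;>
        norm_num [Matrix.conjTranspose, Matrix.IsHermitian, Matrix.transpose_apply,
          Matrix.vecHead, Matrix.vecTail]
    have hx' : x 0 ≠ 0 ∨ x 1 ≠ 0 ∨ x 2 ≠ 0 := by
      by_contra h
      push_neg at h
      exact hx (funext fun i => by fin_cases i <;> simp [h.1, h.2.1, h.2.2])
    simp only [dotProduct, mulVec, Fin.sum_univ_three, Matrix.cons_val',
      Matrix.cons_val_zero, Matrix.cons_val_one, Matrix.head_cons,
      Matrix.empty_val', Matrix.cons_val_fin_one, Matrix.head_fin_const,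
      Matrix.of_apply, Matrix.vecHead, Matrix.vecTail,
      Matrix.cons_val_two, Matrix.tail_cons, star_trivial, Pi.star_apply, RCLike.ofReal_real_eq_id,
      id_eq, Function.comp_apply]
    norm_num
    rcases hx' with h | h | h
    · nlinarith [sq_nonneg (x 0 - x 2), sq_nonneg (x 1), sq_nonneg (x 0 - 2 * x 2),
        sq_pos_of_ne_zero h]
    · nlinarith [sq_nonneg (x 0 - x 2), sq_nonneg (x 2), sq_pos_of_ne_zero h]
    · nlinarith [sq_nonneg (x 0 - x 2), sq_nonneg (x 1), sq_pos_of_ne_zero h]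
  · ext i j; fin_cases i <;> fin_cases j <;>
      norm_num [A, Matrix.mul_apply, Fin.sum_univ_three, Matrix.transpose_apply,
        Matrix.vecHead, Matrix.vecTail, Matrix.cons_val_two, Matrix.cons_val_one,
          Matrix.head_cons, Matrix.cons_val_zero, Matrix.tail_cons]
  · intro u
    have hM : !![(1:ℝ), 0, -1; 0, 1, 0; -1, 0, 2] * Q + Qᵀ * !![1, 0, -1; 0, 1, 0; -1, 0, 2]
        = !![-2, 0, 4; 0, 0, 0; 4, 0, -8] := by
      ext i j; fin_cases i <;> fin_cases j <;>
        norm_num [Q, Matrix.mul_apply, Fin.sum_univ_three, Matrix.transpose_apply,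
          Matrix.vecHead, Matrix.vecTail, Matrix.cons_val_two, Matrix.cons_val_one,
          Matrix.head_cons, Matrix.cons_val_zero, Matrix.tail_cons]
    rw [hM]
    simp only [dotProduct, mulVec, Fin.sum_univ_three, Matrix.cons_val',
      Matrix.cons_val_zero, Matrix.cons_val_one, Matrix.head_cons,
      Matrix.empty_val', Matrix.cons_val_fin_one, Matrix.of_apply,
      Matrix.vecHead, Matrix.vecTail, Matrix.cons_val_two, Matrix.tail_cons, Matrix.cons_val_succ,
      Function.comp_apply]
    nlinarith [sq_nonneg (u 0 - 2 * u 2)]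
end
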